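/- arXiv:2110.01223 — 4 statements merged into one kernel-verified Lean document; each statement's English description precedes it below -/
import Mathlib

section
/- For all $t > 0$, $s > 0$, and $y \in \mathbb{R}$, the oscillatory integral $I(s;y,t) = \int_0^s e^{i(\xi^4+\xi^2)t - i\xi y}\,d\xi$ satisfies $|I(s;y,t)| \le C t^{-1/4}$ for a constant $C > 0$ independent of $y$, $t$, and $s$. -/
/-!
The phase derivative `ψ ξ = (4ξ³ + 2ξ)t - y` is increasing and vanishes at some `ξ₀`; from
`4ξ³ + 2ξ - (4η³ + 2η) = (ξ - η)((ξ - η)² + 3(ξ + η)² + 2)` it satisfies `|ψ ξ| ≥ t|ξ - ξ₀|³`.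
Put `δ = t^(-1/4)`. The part of `[0, s]` within `δ` of `ξ₀` contributes at most `2δ`; on the
remaining (at most two) intervals `|ψ| ≥ tδ³ = δ⁻¹`, and van der Corput's first derivative
estimate for a monotone phase derivative (integration by parts against `1/ψ`) bounds each of
them by `4δ`.
-/

open MeasureTheory Complex Set intervalIntegral

theorem norm_integral_exp_mul_I_le_of_le_abs_deriv {φ ψ ψ' : ℝ → ℝ} {a b lam : ℝ}
    (hab : a ≤ b) (hlam : 0 < lam)
    (hφ : ∀ x ∈ Icc a b, HasDerivAt φ (ψ x) x) (hψ : ∀ x ∈ Icc a b, HasDerivAt ψ (ψ' x) x)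
    (hψ'_cont : ContinuousOn ψ' (Icc a b)) (hψ'_nonneg : ∀ x ∈ Icc a b, 0 ≤ ψ' x)
    (hlam_le : ∀ x ∈ Icc a b, lam ≤ |ψ x|) :
    ‖∫ x in a..b, exp (φ x * I)‖ ≤ 4 / lam := by
  have hI : uIcc a b = Icc a b := uIcc_of_le hab
  have hψ_ne : ∀ x ∈ Icc a b, ψ x ≠ 0 := fun x hx => abs_pos.1 (hlam.trans_le (hlam_le x hx))
  have hψ_cont : ContinuousOn ψ (Icc a b) := fun x hx => (hψ x hx).continuousAt.continuousWithinAt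
  have hφ_cont : ContinuousOn φ (Icc a b) := fun x hx => (hφ x hx).continuousAt.continuousWithinAt
  set u : ℝ → ℂ := fun x => exp (φ x * I)
  set g' : ℝ → ℝ := fun x => -ψ' x / ψ x ^ 2
  have hu : ∀ x ∈ Icc a b, HasDerivAt u (u x * (ψ x * I)) x := fun x hx =>
    ((hφ x hx).ofReal_comp.mul_const I).cexp
  have hg : ∀ x ∈ Icc a b, HasDerivAt (fun x => (ψ x)⁻¹) (g' x) x := fun x hx =>
    (hψ x hx).inv (hψ_ne x hx)
  have hg'_cont : ContinuousOn g' (Icc a b) :=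
    hψ'_cont.neg.div (hψ_cont.pow 2) fun x hx => pow_ne_zero 2 (hψ_ne x hx)
  have hg_le : ∀ x ∈ Icc a b, |(ψ x)⁻¹| ≤ lam⁻¹ := fun x hx => by
    rw [abs_inv]; exact inv_anti₀ hlam (hlam_le x hx)
  have norm_u_mul (r : ℝ) (x : ℝ) : ‖u x * (r * -I)‖ = |r| := by
    simp [u, norm_exp_ofReal_mul_I]
  -- integration by parts against `v = -i / ψ`, for which `u' v = u`
  have hibp := integral_mul_deriv_eq_deriv_mul (u := u) (v := fun x => ((ψ x)⁻¹ : ℝ) * -I)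
    (fun x hx => hu x (hI ▸ hx)) (fun x hx => ((hg x (hI ▸ hx)).ofReal_comp.mul_const (-I)))
    (by apply ContinuousOn.intervalIntegrable_of_Icc hab; fun_prop)
    (by apply ContinuousOn.intervalIntegrable_of_Icc hab; fun_prop)
  have hu'v : ∫ x in a..b, u x * (ψ x * I) * (((ψ x)⁻¹ : ℝ) * -I) = ∫ x in a..b, u x := by
    refine integral_congr fun x hx => ?_
    have : (ψ x : ℂ) ≠ 0 := ofReal_ne_zero.2 (hψ_ne x (hI ▸ hx))
    push_cast
    field_simp
    simp [I_sq]
  have h_rem : ‖∫ x in a..b, u x * (g' x * -I)‖ ≤ 2 * lam⁻¹ := calc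
    _ ≤ ∫ x in a..b, -g' x := by
      refine norm_integral_le_of_norm_le hab (ae_of_all _ fun x hx => ?_) ?_
      · rw [norm_u_mul, abs_of_nonpos]
        exact div_nonpos_of_nonpos_of_nonneg (neg_nonpos.2 (hψ'_nonneg x (Ioc_subset_Icc_self hx)))
          (sq_nonneg _)
      · exact hg'_cont.neg.intervalIntegrable_of_Icc hab
    _ = (ψ a)⁻¹ - (ψ b)⁻¹ := by
      rw [intervalIntegral.integral_neg, integral_eq_sub_of_hasDerivAt (fun x hx => hg x (hI ▸ hx))
        (hg'_cont.intervalIntegrable_of_Icc hab), neg_sub]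
    _ ≤ 2 * lam⁻¹ := by
      have ha := hg_le a (left_mem_Icc.2 hab)
      have hb := hg_le b (right_mem_Icc.2 hab)
      linarith [le_abs_self (ψ a)⁻¹, neg_abs_le (ψ b)⁻¹]
  rw [hu'v] at hibp
  calc ‖∫ x in a..b, u x‖
      = ‖u b * (((ψ b)⁻¹ : ℝ) * -I) - u a * (((ψ a)⁻¹ : ℝ) * -I)
          - ∫ x in a..b, u x * (g' x * -I)‖ := by rw [hibp]; ring_nf
    _ ≤ lam⁻¹ + lam⁻¹ + 2 * lam⁻¹ := by
      refine (norm_sub_le _ _).trans (add_le_add ((norm_sub_le _ _).trans (add_le_add ?_ ?_)) h_rem)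
      · rw [norm_u_mul]; exact hg_le b (right_mem_Icc.2 hab)
      · rw [norm_u_mul]; exact hg_le a (left_mem_Icc.2 hab)
    _ = 4 / lam := by ring

theorem norm_integral_exp_mul_I_le_of_le_abs_deriv_off_ball {φ ψ ψ' : ℝ → ℝ}
    {a b x₀ δ lam : ℝ} (hab : a ≤ b) (hδ : 0 ≤ δ) (hlam : 0 < lam)
    (hφ : ∀ x, HasDerivAt φ (ψ x) x) (hψ : ∀ x, HasDerivAt ψ (ψ' x) x)
    (hψ'_cont : Continuous ψ') (hψ'_nonneg : ∀ x, 0 ≤ ψ' x)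
    (hlam_le : ∀ x, δ ≤ |x - x₀| → lam ≤ |ψ x|) :
    ‖∫ x in a..b, exp (φ x * I)‖ ≤ 8 / lam + 2 * δ := by
  have vdc {a' b'} (h : a' ≤ b') (hlam_le' : ∀ x ∈ Icc a' b', lam ≤ |ψ x|) :=
    norm_integral_exp_mul_I_le_of_le_abs_deriv (φ := φ) h hlam (fun x _ => hφ x)
      (fun x _ => hψ x) hψ'_cont.continuousOn (fun x _ => hψ'_nonneg x) hlam_le'
  have hf : Continuous fun x => exp (φ x * I) := by
    have : Continuous φ := continuous_iff_continuousAt.2 fun x => (hφ x).continuousAt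
    fun_prop
  set c : ℝ := ↑(projIcc a b hab (x₀ - δ))
  set d : ℝ := ↑(projIcc a b hab (x₀ + δ))
  have hcd : c ≤ d := monotone_projIcc hab (by linarith)
  have h_left : ‖∫ x in a..c, exp (φ x * I)‖ ≤ 4 / lam := by
    rcases le_or_gt (x₀ - δ) a with h | h
    · simp only [c, projIcc_of_le_left hab h, integral_same, norm_zero]; positivity
    · refine vdc (projIcc a b hab _).2.1 fun x hx => hlam_le x ?_
      have : c ≤ x₀ - δ := by simp only [c, coe_projIcc]; exact max_le h.le (min_le_right _ _)
      rw [abs_sub_comm]; exact le_abs.2 (Or.inl (by linarith [hx.2]))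
  have h_right : ‖∫ x in d..b, exp (φ x * I)‖ ≤ 4 / lam := by
    rcases le_or_gt b (x₀ + δ) with h | h
    · simp only [d, projIcc_of_right_le hab h, integral_same, norm_zero]; positivity
    · refine vdc (projIcc a b hab _).2.2 fun x hx => hlam_le x ?_
      have : x₀ + δ ≤ d := by
        simp only [d, coe_projIcc]; exact le_max_of_le_right (le_min h.le le_rfl)
      exact le_abs.2 (Or.inl (by linarith [hx.1]))
  have h_mid : ‖∫ x in c..d, exp (φ x * I)‖ ≤ 2 * δ := calc
    _ ≤ 1 * |d - c| := norm_integral_le_of_norm_le_const fun x _ => (norm_exp_ofReal_mul_I _).le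
    _ ≤ 2 * δ := by
      rw [one_mul]
      refine (abs_projIcc_sub_projIcc hab).trans ?_
      rw [abs_of_nonneg (by linarith)]; linarith
  rw [← integral_add_adjacent_intervals (hf.intervalIntegrable a c) (hf.intervalIntegrable c b),
    ← integral_add_adjacent_intervals (hf.intervalIntegrable c d) (hf.intervalIntegrable d b)]
  calc _ ≤ ‖∫ x in a..c, exp (φ x * I)‖ + (‖∫ x in c..d, exp (φ x * I)‖
        + ‖∫ x in d..b, exp (φ x * I)‖) :=
        (norm_add_le _ _).trans (by gcongr; exact norm_add_le _ _)
    _ ≤ 4 / lam + (2 * δ + 4 / lam) := by gcongr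
    _ = 8 / lam + 2 * δ := by ring

theorem pow_three_abs_sub_le_abs_sub_cubic (ξ η : ℝ) :
    |ξ - η| ^ 3 ≤ |(4 * ξ ^ 3 + 2 * ξ) - (4 * η ^ 3 + 2 * η)| := by
  have : (4 * ξ ^ 3 + 2 * ξ) - (4 * η ^ 3 + 2 * η)
      = (ξ - η) * ((ξ - η) ^ 2 + 3 * (ξ + η) ^ 2 + 2) := by ring
  calc |ξ - η| ^ 3 = |ξ - η| * (ξ - η) ^ 2 := by rw [pow_succ', sq_abs]
    _ ≤ |ξ - η| * ((ξ - η) ^ 2 + 3 * (ξ + η) ^ 2 + 2) := by gcongr; linarith [sq_nonneg (ξ + η)]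
    _ = _ := by
      rw [this, abs_mul, abs_of_pos (by positivity : (0:ℝ) < (ξ - η) ^ 2 + 3 * (ξ + η) ^ 2 + 2)]

section QuarticPhase

variable (t y ξ : ℝ)

theorem hasDerivAt_quartic_phase :
    HasDerivAt (fun ξ => (ξ ^ 4 + ξ ^ 2) * t - ξ * y) ((4 * ξ ^ 3 + 2 * ξ) * t - y) ξ :=
  ((((hasDerivAt_pow 4 ξ).add (hasDerivAt_pow 2 ξ)).mul_const t).sub
    ((hasDerivAt_id ξ).mul_const y)).congr_deriv (by push_cast; ring)

theorem hasDerivAt_quartic_phase_deriv :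
    HasDerivAt (fun ξ => (4 * ξ ^ 3 + 2 * ξ) * t - y) ((12 * ξ ^ 2 + 2) * t) ξ :=
  ((((hasDerivAt_pow 3 ξ).const_mul 4).add
    ((hasDerivAt_id ξ).const_mul 2)).mul_const t |>.sub_const y).congr_deriv (by push_cast; ring)

variable {t y}

theorem exists_quartic_phase_deriv_eq (ht : 0 < t) : ∃ ξ₀, (4 * ξ₀ ^ 3 + 2 * ξ₀) * t = y := by
  have hR : 2 * (|y| / (2 * t)) * t = |y| := by field_simp
  refine intermediate_value_univ₂ (a := -(|y| / (2 * t))) (b := |y| / (2 * t))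
    (by fun_prop) continuous_const ?_ ?_
  · nlinarith [neg_abs_le y, pow_nonneg (by positivity : 0 ≤ |y| / (2 * t)) 3]
  · nlinarith [le_abs_self y, pow_nonneg (by positivity : 0 ≤ |y| / (2 * t)) 3]

theorem mul_pow_three_abs_sub_le_abs_quartic_phase_deriv (ht : 0 ≤ t) {ξ₀ : ℝ}
    (hξ₀ : (4 * ξ₀ ^ 3 + 2 * ξ₀) * t = y) :
    t * |ξ - ξ₀| ^ 3 ≤ |(4 * ξ ^ 3 + 2 * ξ) * t - y| := by
  rw [← hξ₀, ← sub_mul, abs_mul, abs_of_nonneg ht, mul_comm]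
  exact mul_le_mul_of_nonneg_right (pow_three_abs_sub_le_abs_sub_cubic ξ ξ₀) ht

end QuarticPhase

theorem stmt_0 :
    ∃ C : ℝ, 0 < C ∧ ∀ t s y : ℝ, 0 < t → 0 < s →
      ‖∫ ξ in (0:ℝ)..s, Complex.exp (Complex.I * (((ξ^4 + ξ^2) * t : ℝ) - ξ * y))‖
        ≤ C * t ^ (-(1/4 : ℝ)) := by
  refine ⟨10, by norm_num, fun t s y ht hs => ?_⟩
  set δ := t ^ (-(1/4 : ℝ))
  have hδ : 0 < δ := by positivity
  have hlam : t * δ ^ 3 = δ⁻¹ := by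
    rw [← Real.rpow_natCast, ← Real.rpow_mul ht.le, ← Real.rpow_neg ht.le]
    nth_rewrite 1 [← Real.rpow_one t]
    rw [← Real.rpow_add ht]; norm_num
  obtain ⟨ξ₀, hξ₀⟩ := exists_quartic_phase_deriv_eq ht (y := y)
  calc _ = ‖∫ ξ in (0:ℝ)..s, exp (((ξ ^ 4 + ξ ^ 2) * t - ξ * y : ℝ) * I)‖ := by
        congr 1; refine integral_congr fun ξ _ => ?_; push_cast; ring_nf
    _ ≤ 8 / δ⁻¹ + 2 * δ := by
      refine norm_integral_exp_mul_I_le_of_le_abs_deriv_off_ball (x₀ := ξ₀) hs.le hδ.le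
        (inv_pos.2 hδ)
        (hasDerivAt_quartic_phase t y) (hasDerivAt_quartic_phase_deriv t y) (by fun_prop)
        (fun ξ => by positivity) fun ξ hξ => ?_
      calc δ⁻¹ = t * δ ^ 3 := hlam.symm
        _ ≤ t * |ξ - ξ₀| ^ 3 := by gcongr
        _ ≤ _ := mul_pow_three_abs_sub_le_abs_quartic_phase_deriv ξ ht.le hξ₀
    _ = 10 * δ := by rw [div_inv_eq_mul]; ring
end

section
/- For all $t > 0$, $s > 1/\sqrt{2}$, and $\omega \in \mathbb{R}$, the oscillatory integral $I(s;\omega,t) = \int_{1/\sqrt{2}}^s e^{i\xi\omega - i(4\xi^4 - 2\xi^2 + 1/4)t}\,d\xi$ satisfies $|I(s;\omega,t)| \le C t^{-1/4}$ for a constant $C$ independent of $\omega$, $t$, and $s$. -/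
/-!
The phase `φ(ξ) = ξω - (4ξ⁴ - 2ξ² + 1/4)t` has `φ''(ξ) = -(48ξ² - 4)t`, so it is uniformly
concave on `[A, ∞)` with `|φ''| ≥ (48A² - 4)t` as soon as `A ≥ 1/√2`. Put `τ = t^(-1/4)` and
`A = max (1/√2) τ`. On `[1/√2, A]` the integrand has modulus one and the interval has length at
most `τ`; on `[A, s]` van der Corput's second derivative estimate gives `10 / √((48A² - 4)t)`,
and `(48A² - 4)t ≥ 25 A² t ≥ 25 τ² t = 25 / τ²`. Hence the integral is at most `3τ`.
-/

open MeasureTheory Complex Set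

lemma forall_mem_Icc_of_forall_mem_Ioo {f : ℝ → ℝ} {s : Set ℝ} {a b : ℝ} (hs : IsClosed s)
    (hab : a < b) (hf : ContinuousOn f (Icc a b)) (h : ∀ x ∈ Ioo a b, f x ∈ s) :
    ∀ x ∈ Icc a b, f x ∈ s := by
  rw [← closure_Ioo hab.ne] at hf ⊢
  have := MapsTo.closure_of_continuousOn h hf
  rwa [hs.closure_eq] at this

lemma AntitoneOn.exists_crossing {f : ℝ → ℝ} {a b : ℝ} (hab : a ≤ b)
    (hf : ContinuousOn f (Icc a b)) (hanti : AntitoneOn f (Icc a b)) (y : ℝ) :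
    ∃ c ∈ Icc a b, (∀ x ∈ Ioo a c, y ≤ f x) ∧ ∀ x ∈ Ioo c b, f x ≤ y := by
  by_cases hya : f a ≤ y
  · refine ⟨a, left_mem_Icc.2 hab, fun x hx => (hx.1.not_gt hx.2).elim, fun x hx => ?_⟩
    exact (hanti (left_mem_Icc.2 hab) (Ioo_subset_Icc_self hx) hx.1.le).trans hya
  by_cases hyb : y ≤ f b
  · refine ⟨b, right_mem_Icc.2 hab, fun x hx => ?_, fun x hx => (hx.1.not_gt hx.2).elim⟩
    exact hyb.trans (hanti (Ioo_subset_Icc_self hx) (right_mem_Icc.2 hab) hx.2.le)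
  obtain ⟨c, hc, rfl⟩ := intermediate_value_Icc' hab hf ⟨(not_le.1 hyb).le, (not_le.1 hya).le⟩
  exact ⟨c, hc, fun x hx => hanti ⟨hx.1.le, hx.2.le.trans hc.2⟩ hc hx.2.le,
    fun x hx => hanti hc ⟨hc.1.trans hx.1.le, hx.2.le⟩ hx.1.le⟩

section OscillatoryIntegral

variable {φ φ' φ'' : ℝ → ℝ} {a b : ℝ}

lemma norm_integral_cexp_mul_I_le (φ : ℝ → ℝ) (hab : a ≤ b) :
    ‖∫ x in a..b, cexp (φ x * I)‖ ≤ b - a := by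
  simpa [abs_of_nonneg (sub_nonneg.2 hab)] using
    intervalIntegral.norm_integral_le_of_norm_le_const (a := a) (b := b) (C := 1)
      fun x _ => (norm_exp_ofReal_mul_I (φ x)).le

lemma intervalIntegrable_cexp_mul_I (hφ : Continuous φ) (a b : ℝ) :
    IntervalIntegrable (fun x => cexp (φ x * I)) volume a b :=
  (by fun_prop : Continuous fun x => cexp (φ x * I)).intervalIntegrable a b

lemma integral_cexp_mul_I_eq_by_parts (hab : a ≤ b)
    (hφ : ∀ x, HasDerivAt φ (φ' x) x) (hφ' : ∀ x, HasDerivAt φ' (φ'' x) x)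
    (hne : ∀ x ∈ Icc a b, φ' x ≠ 0)
    (hint : IntervalIntegrable (fun x => -φ'' x / φ' x ^ 2) volume a b) :
    ∫ x in a..b, cexp (φ x * I) = -I * ((φ' b)⁻¹ : ℝ) * cexp (φ b * I)
      - -I * ((φ' a)⁻¹ : ℝ) * cexp (φ a * I)
      - ∫ x in a..b, -I * ((-φ'' x / φ' x ^ 2 : ℝ) : ℂ) * cexp (φ x * I) := by
  have hφ_cont : Continuous φ := continuous_iff_continuousAt.2 fun x => (hφ x).continuousAt
  have hφ'_cont : Continuous φ' := continuous_iff_continuousAt.2 fun x => (hφ' x).continuousAt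
  rw [← intervalIntegral.integral_mul_deriv_eq_deriv_mul
    (u := fun x => -I * ((φ' x)⁻¹ : ℝ)) (u' := fun x => -I * ((-φ'' x / φ' x ^ 2 : ℝ) : ℂ))
    (v := fun x => cexp (φ x * I)) (v' := fun x => cexp (φ x * I) * (φ' x * I))
    (fun x hx => ((hφ' x).inv (hne x (uIcc_of_le hab ▸ hx))).ofReal_comp.const_mul (-I))
    (fun x _ => ((hφ x).ofReal_comp.mul_const I).cexp)
    (IntervalIntegrable.const_mul ⟨Integrable.ofReal hint.1, Integrable.ofReal hint.2⟩ _)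
    ((by fun_prop : Continuous fun x => cexp (φ x * I) * (φ' x * I)).intervalIntegrable a b)]
  refine intervalIntegral.integral_congr fun x hx => ?_
  have : (φ' x : ℂ) ≠ 0 := ofReal_ne_zero.2 (hne x (uIcc_of_le hab ▸ hx))
  push_cast
  field_simp
  rw [I_sq, neg_neg]

/-- First derivative test for a concave phase: after integrating by parts, the remainder is
bounded by the variation of the monotone function `1 / φ'`. -/
lemma norm_integral_cexp_mul_I_le_of_le_abs_deriv (hab : a ≤ b)
    (hφ : ∀ x, HasDerivAt φ (φ' x) x) (hφ' : ∀ x, HasDerivAt φ' (φ'' x) x)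
    (hφ'' : ∀ x ∈ Icc a b, φ'' x ≤ 0) {δ : ℝ} (hδ : 0 < δ) (hφ'δ : ∀ x ∈ Ioo a b, δ ≤ |φ' x|) :
    ‖∫ x in a..b, cexp (φ x * I)‖ ≤ 4 / δ := by
  rcases hab.eq_or_lt with rfl | hab
  · simp only [intervalIntegral.integral_same, norm_zero]; positivity
  have hδφ' : ∀ x ∈ Icc a b, δ ≤ |φ' x| := forall_mem_Icc_of_forall_mem_Ioo (s := {y | δ ≤ |y|})
    (isClosed_le continuous_const continuous_abs) hab
    (fun x _ => (hφ' x).continuousAt.continuousWithinAt) hφ'δ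
  have hne : ∀ x ∈ Icc a b, φ' x ≠ 0 := fun x hx h => by
    have := hδφ' x hx; rw [h, abs_zero] at this; linarith
  have hinv_le : ∀ x ∈ Icc a b, |(φ' x)⁻¹| ≤ 1 / δ := fun x hx => by
    rw [abs_inv, ← one_div]; exact one_div_le_one_div_of_le hδ (hδφ' x hx)
  have hw : ∀ x ∈ uIcc a b, HasDerivAt (fun x => (φ' x)⁻¹) (-φ'' x / φ' x ^ 2) x :=
    fun x hx => (hφ' x).inv (hne x (uIcc_of_le hab.le ▸ hx))
  have hw_nonneg : ∀ x ∈ Icc a b, 0 ≤ -φ'' x / φ' x ^ 2 :=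
    fun x hx => div_nonneg (neg_nonneg.2 (hφ'' x hx)) (sq_nonneg _)
  have hw_int : IntervalIntegrable (fun x => -φ'' x / φ' x ^ 2) volume a b := by
    rw [← uIcc_of_le hab.le] at hw_nonneg
    refine intervalIntegral.intervalIntegrable_deriv_of_nonneg
      (fun x hx => (hw x hx).continuousAt.continuousWithinAt)
      (fun x hx => hw x (Ioo_subset_Icc_self hx)) fun x hx => hw_nonneg x (Ioo_subset_Icc_self hx)
  have hnorm : ∀ (r : ℝ) x, ‖-I * (r : ℂ) * cexp (φ x * I)‖ = |r| := fun r x => by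
    rw [norm_mul, norm_mul, norm_neg, norm_I, norm_real, norm_exp_ofReal_mul_I, one_mul, mul_one,
      Real.norm_eq_abs]
  have hremainder : ‖∫ x in a..b, -I * ((-φ'' x / φ' x ^ 2 : ℝ) : ℂ) * cexp (φ x * I)‖
      ≤ (φ' b)⁻¹ - (φ' a)⁻¹ := by
    rw [← intervalIntegral.integral_eq_sub_of_hasDerivAt hw hw_int]
    refine intervalIntegral.norm_integral_le_of_norm_le hab.le (ae_of_all _ fun x hx => ?_) hw_int
    rw [hnorm, abs_of_nonneg (hw_nonneg x (Ioc_subset_Icc_self hx))]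
  rw [integral_cexp_mul_I_eq_by_parts hab.le hφ hφ' hne hw_int]
  have hb := hinv_le b (right_mem_Icc.2 hab.le)
  have ha := hinv_le a (left_mem_Icc.2 hab.le)
  calc _ ≤ ‖-I * ((φ' b)⁻¹ : ℝ) * cexp (φ b * I)‖ + ‖-I * ((φ' a)⁻¹ : ℝ) * cexp (φ a * I)‖
        + ‖∫ x in a..b, -I * ((-φ'' x / φ' x ^ 2 : ℝ) : ℂ) * cexp (φ x * I)‖ :=
        (norm_sub_le _ _).trans (by gcongr; exact norm_sub_le _ _)
    _ ≤ 4 / δ := by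
        rw [hnorm, hnorm, show 4 / δ = 4 * (1 / δ) by ring]
        linarith [le_abs_self (φ' b)⁻¹, neg_abs_le (φ' a)⁻¹]

/-- Van der Corput's lemma for a uniformly concave phase: since `φ'` decreases at rate at least
`l`, `|φ'| < √l` only on an interval of length at most `2 / √l`, and the first derivative test
applies on both sides of it. -/
lemma norm_integral_cexp_mul_I_le_of_deriv2_le (hab : a ≤ b)
    (hφ : ∀ x, HasDerivAt φ (φ' x) x) (hφ' : ∀ x, HasDerivAt φ' (φ'' x) x) {l : ℝ} (hl : 0 < l)
    (hφ'' : ∀ x ∈ Icc a b, φ'' x ≤ -l) :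
    ‖∫ x in a..b, cexp (φ x * I)‖ ≤ 10 / √l := by
  set δ := √l
  have hδ : 0 < δ := Real.sqrt_pos.2 hl
  have hφ'_cont : ContinuousOn φ' (Icc a b) := fun x _ => (hφ' x).continuousAt.continuousWithinAt
  have hφ''_nonpos : ∀ x ∈ Icc a b, φ'' x ≤ 0 := fun x hx => (hφ'' x hx).trans (by linarith)
  have hslope : ∀ x ∈ Icc a b, ∀ y ∈ Icc a b, x ≤ y → φ' y - φ' x ≤ -l * (y - x) :=
    (convex_Icc a b).image_sub_le_mul_sub_of_deriv_le hφ'_cont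
      (fun x _ => (hφ' x).differentiableAt.differentiableWithinAt)
      fun x hx => (hφ' x).deriv ▸ hφ'' x (interior_subset hx)
  have hanti : AntitoneOn φ' (Icc a b) := fun x hx y hy hxy => by
    nlinarith [hslope x hx y hy hxy]
  obtain ⟨c₁, hc₁, hge, hle⟩ := hanti.exists_crossing hab hφ'_cont δ
  obtain ⟨c₂, hc₂, hmid, hneg⟩ := (hanti.mono (Icc_subset_Icc_left hc₁.1)).exists_crossing hc₁.2
    (hφ'_cont.mono (Icc_subset_Icc_left hc₁.1)) (-δ)
  have hc₂b : Icc c₂ b ⊆ Icc a b := Icc_subset_Icc_left (hc₁.1.trans hc₂.1)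
  have h₁ : ‖∫ x in a..c₁, cexp (φ x * I)‖ ≤ 4 / δ :=
    norm_integral_cexp_mul_I_le_of_le_abs_deriv hc₁.1 hφ hφ'
      (fun x hx => hφ''_nonpos x (Icc_subset_Icc_right hc₁.2 hx)) hδ
      fun x hx => (hge x hx).trans (le_abs_self _)
  have h₃ : ‖∫ x in c₂..b, cexp (φ x * I)‖ ≤ 4 / δ :=
    norm_integral_cexp_mul_I_le_of_le_abs_deriv hc₂.2 hφ hφ' (fun x hx => hφ''_nonpos x (hc₂b hx))
      hδ fun x hx => le_abs.2 (Or.inr (by linarith [hneg x hx]))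
  have hlen : c₂ - c₁ ≤ 2 / δ := by
    rcases hc₂.1.eq_or_lt with h | h
    · rw [h, sub_self]; positivity
    have hsmall := forall_mem_Icc_of_forall_mem_Ioo isClosed_Icc h
      (hφ'_cont.mono (Icc_subset_Icc hc₁.1 hc₂.2))
      fun x hx => ⟨hmid x hx, hle x ⟨hx.1, hx.2.trans_le hc₂.2⟩⟩
    have hl_len : l * (c₂ - c₁) ≤ 2 * δ := by
      linarith [hslope c₁ hc₁ c₂ ⟨hc₁.1.trans hc₂.1, hc₂.2⟩ hc₂.1,
        (hsmall c₁ (left_mem_Icc.2 hc₂.1)).2, (hsmall c₂ (right_mem_Icc.2 hc₂.1)).1]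
    rw [le_div_iff₀ hδ]
    nlinarith [Real.mul_self_sqrt hl.le]
  have h₂ := (norm_integral_cexp_mul_I_le φ hc₂.1).trans hlen
  have hint := intervalIntegrable_cexp_mul_I (continuous_iff_continuousAt.2 fun x =>
    (hφ x).continuousAt)
  rw [← intervalIntegral.integral_add_adjacent_intervals (hint a c₁) (hint c₁ b),
    ← intervalIntegral.integral_add_adjacent_intervals (hint c₁ c₂) (hint c₂ b)]
  calc _ ≤ ‖∫ x in a..c₁, cexp (φ x * I)‖ + (‖∫ x in c₁..c₂, cexp (φ x * I)‖
        + ‖∫ x in c₂..b, cexp (φ x * I)‖) :=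
        (norm_add_le _ _).trans (by gcongr; exact norm_add_le _ _)
    _ ≤ 4 / δ + (2 / δ + 4 / δ) := by gcongr
    _ = 10 / δ := by ring

lemma norm_integral_cexp_mul_I_le_of_deriv2_le_on_Ici
    (hφ : ∀ x, HasDerivAt φ (φ' x) x) (hφ' : ∀ x, HasDerivAt φ' (φ'' x) x) {l A s : ℝ}
    (hl : 0 < l) (hφ'' : ∀ x ∈ Ici A, φ'' x ≤ -l) (haA : a ≤ A) (has : a ≤ s) :
    ‖∫ x in a..s, cexp (φ x * I)‖ ≤ (A - a) + 10 / √l := by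
  rcases le_total s A with hsA | hAs
  · have : 0 ≤ 10 / √l := by positivity
    linarith [norm_integral_cexp_mul_I_le φ has]
  have hint := intervalIntegrable_cexp_mul_I (continuous_iff_continuousAt.2 fun x =>
    (hφ x).continuousAt)
  rw [← intervalIntegral.integral_add_adjacent_intervals (hint a A) (hint A s)]
  exact (norm_add_le _ _).trans (add_le_add (norm_integral_cexp_mul_I_le φ haA)
    (norm_integral_cexp_mul_I_le_of_deriv2_le hAs hφ hφ' hl fun x hx => hφ'' x hx.1))

end OscillatoryIntegral

noncomputable def quarticPhase (ω t ξ : ℝ) : ℝ := ξ * ω - (4 * ξ ^ 4 - 2 * ξ ^ 2 + 1 / 4) * t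

lemma hasDerivAt_quarticPhase (ω t ξ : ℝ) :
    HasDerivAt (quarticPhase ω t) (ω - (16 * ξ ^ 3 - 4 * ξ) * t) ξ := by
  have := ((hasDerivAt_id ξ).mul_const ω).sub
    (((((hasDerivAt_pow 4 ξ).const_mul 4).sub ((hasDerivAt_pow 2 ξ).const_mul 2)).add_const
      (1 / 4)).mul_const t)
  exact this.congr_deriv (by push_cast; ring)

lemma hasDerivAt_deriv_quarticPhase (ω t ξ : ℝ) :
    HasDerivAt (fun ξ => ω - (16 * ξ ^ 3 - 4 * ξ) * t) (-((48 * ξ ^ 2 - 4) * t)) ξ := by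
  have := (hasDerivAt_const ξ ω).sub
    ((((hasDerivAt_pow 3 ξ).const_mul 16).sub ((hasDerivAt_id ξ).const_mul 4)).mul_const t)
  exact this.congr_deriv (by push_cast; ring)

theorem stmt_1 :
    ∃ C : ℝ, 0 < C ∧ ∀ t s ω : ℝ, 0 < t → 1 / Real.sqrt 2 < s →
      ‖∫ ξ in (1 / Real.sqrt 2 : ℝ)..s,
          Complex.exp (Complex.I * ((ξ * ω : ℝ) - ((4*ξ^4 - 2*ξ^2 + 1/4) * t : ℝ)))‖
        ≤ C * t ^ (-(1/4 : ℝ)) := by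
  refine ⟨3, by norm_num, fun t s ω ht hs => ?_⟩
  set a := 1 / √2
  set τ := t ^ (-(1 / 4 : ℝ))
  have hτ : 0 < τ := Real.rpow_pos_of_pos ht _
  have hτt : τ ^ 4 * t = 1 := by
    rw [← Real.rpow_mul_natCast ht.le]; norm_num [Real.rpow_neg_one, ht.ne']
  set A := max a τ
  have ha : a ^ 2 = 1 / 2 := by simp [a]
  have hA2 : 1 / 2 ≤ A ^ 2 := ha ▸ pow_le_pow_left₀ (by positivity) (le_max_left a τ) 2
  have hcurv : (5 / τ) ^ 2 ≤ (48 * A ^ 2 - 4) * t := by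
    rw [div_pow, div_le_iff₀ (by positivity)]
    nlinarith [pow_le_pow_left₀ hτ.le (le_max_right a τ) 2]
  have hbound := norm_integral_cexp_mul_I_le_of_deriv2_le_on_Ici (hasDerivAt_quarticPhase ω t)
    (hasDerivAt_deriv_quarticPhase ω t) (lt_of_lt_of_le (by positivity) hcurv)
    (fun ξ hξ => by nlinarith [pow_le_pow_left₀ (by positivity) hξ.out 2]) (le_max_left a τ) hs.le
  calc _ = ‖∫ ξ in a..s, cexp (quarticPhase ω t ξ * I)‖ := by
        congr 1; refine intervalIntegral.integral_congr fun ξ _ => ?_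
        simp only [quarticPhase]; push_cast; ring_nf
    _ ≤ (A - a) + 10 / √((48 * A ^ 2 - 4) * t) := hbound
    _ ≤ τ + 10 / (5 / τ) := by
        gcongr
        · exact sub_le_iff_le_add.2 (max_le (by linarith) (by linarith [show 0 < a by positivity]))
        · exact Real.le_sqrt_of_sq_le hcurv
    _ = 3 * τ := by field_simp; norm_num
end

section
/- The kernel $K_1(y;x,t) = \int_0^\infty e^{-sx + i(s^4+s^2)t - isy}\, ds$ satisfies $|K_1(y;x,t)| \le C t^{-1/4}$ for all $x > 0$, $t > 0$, $y \in \mathbb{R}$, with $C$ independent of $x, y, t$. -/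
/-!
With `φ s = (s⁴ + s²) t - s y` the integrand is `e^{-s x} e^{i φ(s)}`. The amplitude `e^{-s x}`
decreases from `1` to `0`, so integrating by parts against the primitive `r ↦ ∫₀^r e^{i φ}` bounds
the kernel by `sup_r |∫₀^r e^{i φ}|`, uniformly in `x`. On `[0, t^{-1/4}]` the integrand has modulus
`1`; beyond, `φ'' = (12 s² + 2) t ≥ 12 t^{1/2}`, so van der Corput's second derivative estimate
`|∫ e^{i φ}| ≤ 6 / c` for `φ'' ≥ c²` gives `O(t^{-1/4})`. That estimate comes from the first
derivative estimate `|∫ e^{i φ}| ≤ 2 / c` for monotone `φ' ≥ c` (integration by parts against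
`1 / φ'`), used outside a window of length `2 / c` around the zero of `φ'`.
-/

open MeasureTheory Set Complex intervalIntegral

section VanDerCorput

variable {φ φ' φ'' : ℝ → ℝ} {a b c : ℝ}

theorem norm_integral_exp_mul_I_le (φ : ℝ → ℝ) (hab : a ≤ b) :
    ‖∫ s in a..b, exp (φ s * I)‖ ≤ b - a := by
  simpa [abs_of_nonneg (sub_nonneg.2 hab)] using
    norm_integral_le_of_norm_le_const (a := a) (b := b) fun s _ => (norm_exp_ofReal_mul_I (φ s)).le

theorem hasDerivAt_neg_I_mul_exp_mul_I {s : ℝ} (h : HasDerivAt φ (φ' s) s) :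
    HasDerivAt (fun s => -I * exp (φ s * I)) (φ' s * exp (φ s * I)) s :=
  ((h.ofReal_comp.mul_const I).cexp.const_mul (-I)).congr_deriv
    (by linear_combination (-(φ' s) * exp (φ s * I)) * I_sq)

theorem norm_smul_neg_I_mul_exp_mul_I (r x : ℝ) : ‖r • (-I * exp (x * I))‖ = |r| := by
  rw [norm_smul, norm_mul, norm_neg, norm_I, norm_exp_ofReal_mul_I, Real.norm_eq_abs, one_mul,
    mul_one]

theorem norm_integral_exp_mul_I_le_of_le_deriv (hab : a ≤ b)
    (hφ : ∀ s ∈ Icc a b, HasDerivAt φ (φ' s) s) (hφ' : ∀ s ∈ Icc a b, HasDerivAt φ' (φ'' s) s)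
    (hφ'' : ∀ s ∈ Icc a b, 0 ≤ φ'' s) (hc : 0 < c) (hcφ' : ∀ s ∈ Icc a b, c ≤ φ' s) :
    ‖∫ s in a..b, exp (φ s * I)‖ ≤ 2 / c := by
  rw [← uIcc_of_le hab] at hφ hφ' hφ'' hcφ'
  have hpos : ∀ s ∈ uIcc a b, 0 < φ' s := fun s hs => hc.trans_le (hcφ' s hs)
  have hu : ∀ s ∈ uIcc a b, HasDerivAt (fun s => (φ' s)⁻¹) (-(φ'' s / φ' s ^ 2)) s :=
    fun s hs => by simpa only [neg_div] using (hφ' s hs).fun_inv (hpos s hs).ne'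
  have hw : ∀ s ∈ uIcc a b, HasDerivAt (fun s => -(φ' s)⁻¹) (φ'' s / φ' s ^ 2) s :=
    fun s hs => by simpa only [neg_neg] using (hu s hs).fun_neg
  -- `(φ')⁻¹` is monotone, so its derivative is integrable without any regularity of `φ''`
  have hw'_int : IntervalIntegrable (fun s => φ'' s / φ' s ^ 2) volume a b :=
    intervalIntegrable_deriv_of_nonneg (fun s hs => (hw s hs).continuousAt.continuousWithinAt)
      (fun s hs => hw s (Ioo_subset_Icc_self hs))
      fun s hs => div_nonneg (hφ'' s (Ioo_subset_Icc_self hs)) (sq_nonneg _)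
  have hv'_int : IntervalIntegrable (fun s => (φ' s : ℂ) * exp (φ s * I)) volume a b := by
    refine ContinuousOn.intervalIntegrable fun s hs => ContinuousAt.continuousWithinAt ?_
    have := (hφ s hs).continuousAt
    have := (hφ' s hs).continuousAt
    fun_prop
  have hexp : ∫ s in a..b, exp (φ s * I)
      = ∫ s in a..b, (φ' s)⁻¹ • ((φ' s : ℂ) * exp (φ s * I)) :=
    integral_congr fun s hs => by
      rw [Complex.real_smul, ← mul_assoc, ← ofReal_mul, inv_mul_cancel₀ (hpos s hs).ne',
        ofReal_one, one_mul]
  have hrem : ‖∫ s in a..b, (-(φ'' s / φ' s ^ 2)) • (-I * exp (φ s * I))‖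
      ≤ (φ' a)⁻¹ - (φ' b)⁻¹ :=
    calc _ ≤ ∫ s in a..b, φ'' s / φ' s ^ 2 := by
          refine norm_integral_le_of_norm_le hab (ae_of_all _ fun s hs => ?_) hw'_int
          have hs' : s ∈ uIcc a b := uIoc_subset_uIcc (uIoc_of_le hab ▸ hs)
          rw [norm_smul_neg_I_mul_exp_mul_I, abs_neg,
            abs_of_nonneg (div_nonneg (hφ'' s hs') (sq_nonneg _))]
      _ = (φ' a)⁻¹ - (φ' b)⁻¹ := by
          rw [integral_eq_sub_of_hasDerivAt hw hw'_int]; ring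
  have ha : a ∈ uIcc a b := left_mem_uIcc
  have hb : b ∈ uIcc a b := right_mem_uIcc
  rw [hexp, integral_smul_deriv_eq_deriv_smul hu
    (fun s hs => hasDerivAt_neg_I_mul_exp_mul_I (hφ s hs)) hw'_int.neg hv'_int]
  calc _ ≤ (φ' b)⁻¹ + (φ' a)⁻¹ + ((φ' a)⁻¹ - (φ' b)⁻¹) := by
        refine (norm_sub_le _ _).trans (add_le_add ((norm_sub_le _ _).trans ?_) hrem)
        rw [norm_smul_neg_I_mul_exp_mul_I, norm_smul_neg_I_mul_exp_mul_I,
          abs_of_pos (inv_pos.2 (hpos b hb)), abs_of_pos (inv_pos.2 (hpos a ha))]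
    _ = 2 * (φ' a)⁻¹ := by ring
    _ ≤ 2 / c := by
        rw [div_eq_mul_inv]
        gcongr
        exact hcφ' a ha

theorem intervalIntegrable_exp_mul_I (hφ : ∀ s ∈ Icc a b, HasDerivAt φ (φ' s) s) {l r : ℝ}
    (hl : a ≤ l) (hlr : l ≤ r) (hr : r ≤ b) :
    IntervalIntegrable (fun s => exp (φ s * I)) volume l r := by
  refine ContinuousOn.intervalIntegrable fun s hs => ContinuousAt.continuousWithinAt ?_
  rw [uIcc_of_le hlr] at hs
  have := (hφ s ⟨hl.trans hs.1, hs.2.trans hr⟩).continuousAt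
  fun_prop

theorem norm_integral_exp_mul_I_le_of_deriv_left_nonneg (hab : a ≤ b)
    (hφ : ∀ s ∈ Icc a b, HasDerivAt φ (φ' s) s) (hφ' : ∀ s ∈ Icc a b, HasDerivAt φ' (φ'' s) s)
    (hc : 0 < c) (hφ'' : ∀ s ∈ Icc a b, c ^ 2 ≤ φ'' s) (ha : 0 ≤ φ' a) :
    ‖∫ s in a..b, exp (φ s * I)‖ ≤ 3 / c := by
  rcases le_total b (a + c⁻¹) with hb | hb
  · calc _ ≤ b - a := norm_integral_exp_mul_I_le φ hab
      _ ≤ 3 / c := by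
          have : 0 < c⁻¹ := inv_pos.2 hc
          rw [div_eq_mul_inv]; linarith
  have hgrowth : ∀ s ∈ Icc a b, c ^ 2 * (s - a) ≤ φ' s - φ' a := fun s hs =>
    (convex_Icc a b).mul_sub_le_image_sub_of_le_deriv
      (fun s hs => (hφ' s hs).continuousAt.continuousWithinAt)
      (fun s hs => (hφ' s (interior_subset hs)).differentiableAt.differentiableWithinAt)
      (fun s hs => (hφ' s (interior_subset hs)).deriv ▸ hφ'' s (interior_subset hs))
      a (left_mem_Icc.2 hab) s hs hs.1
  have hfar : ∀ s ∈ Icc (a + c⁻¹) b, c ≤ φ' s := fun s hs => by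
    have hsa : c⁻¹ ≤ s - a := by linarith [hs.1]
    have := hgrowth s ⟨by linarith [inv_pos.2 hc], hs.2⟩
    calc c = c ^ 2 * c⁻¹ := by field_simp
      _ ≤ c ^ 2 * (s - a) := by gcongr
      _ ≤ φ' s := by linarith
  have hmid : a ≤ a + c⁻¹ := by linarith [inv_pos.2 hc]
  have hsub : Icc (a + c⁻¹) b ⊆ Icc a b := Icc_subset_Icc_left hmid
  rw [← integral_add_adjacent_intervals (intervalIntegrable_exp_mul_I hφ le_rfl hmid hb)
    (intervalIntegrable_exp_mul_I hφ hmid hb le_rfl)]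
  calc _ ≤ c⁻¹ + 2 / c := (norm_add_le _ _).trans <| add_le_add
        ((norm_integral_exp_mul_I_le φ hmid).trans_eq (by ring))
        (norm_integral_exp_mul_I_le_of_le_deriv hb (fun s hs => hφ s (hsub hs))
          (fun s hs => hφ' s (hsub hs))
          (fun s hs => (sq_nonneg c).trans (hφ'' s (hsub hs))) hc hfar)
    _ = 3 / c := by ring

theorem norm_integral_exp_mul_I_le_of_deriv_right_nonpos (hab : a ≤ b)
    (hφ : ∀ s ∈ Icc a b, HasDerivAt φ (φ' s) s) (hφ' : ∀ s ∈ Icc a b, HasDerivAt φ' (φ'' s) s)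
    (hc : 0 < c) (hφ'' : ∀ s ∈ Icc a b, c ^ 2 ≤ φ'' s) (hb : φ' b ≤ 0) :
    ‖∫ s in a..b, exp (φ s * I)‖ ≤ 3 / c := by
  have hmem : ∀ s ∈ Icc (-b) (-a), -s ∈ Icc a b := fun s hs =>
    ⟨le_neg_of_le_neg hs.2, neg_le_of_neg_le hs.1⟩
  have hreflect := norm_integral_exp_mul_I_le_of_deriv_left_nonneg (φ := fun s => φ (-s))
    (φ' := fun s => -φ' (-s)) (φ'' := fun s => φ'' (-s)) (neg_le_neg hab)
    (fun s hs => ((hφ (-s) (hmem s hs)).comp s (hasDerivAt_neg s)).congr_deriv (by ring))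
    (fun s hs => ((hφ' (-s) (hmem s hs)).comp s (hasDerivAt_neg s)).fun_neg.congr_deriv
      (by ring))
    hc (fun s hs => hφ'' (-s) (hmem s hs)) (by simpa using hb)
  have hcomp := integral_comp_neg (a := a) (b := b) fun s => exp (φ (-s) * I)
  simp only [neg_neg] at hcomp
  rwa [hcomp]

theorem norm_integral_exp_mul_I_le_of_sq_le_deriv2 (hab : a ≤ b)
    (hφ : ∀ s ∈ Icc a b, HasDerivAt φ (φ' s) s) (hφ' : ∀ s ∈ Icc a b, HasDerivAt φ' (φ'' s) s)
    (hc : 0 < c) (hφ'' : ∀ s ∈ Icc a b, c ^ 2 ≤ φ'' s) :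
    ‖∫ s in a..b, exp (φ s * I)‖ ≤ 6 / c := by
  rcases le_or_gt 0 (φ' a) with ha | ha
  · exact (norm_integral_exp_mul_I_le_of_deriv_left_nonneg hab hφ hφ' hc hφ'' ha).trans
      (by gcongr; norm_num)
  rcases le_or_gt (φ' b) 0 with hb | hb
  · exact (norm_integral_exp_mul_I_le_of_deriv_right_nonpos hab hφ hφ' hc hφ'' hb).trans
      (by gcongr; norm_num)
  obtain ⟨m, hm, hm0⟩ : ∃ m ∈ Icc a b, φ' m = 0 :=
    intermediate_value_Icc hab (fun s hs => (hφ' s hs).continuousAt.continuousWithinAt)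
      ⟨ha.le, hb.le⟩
  have hl : Icc a m ⊆ Icc a b := Icc_subset_Icc_right hm.2
  have hr : Icc m b ⊆ Icc a b := Icc_subset_Icc_left hm.1
  rw [← integral_add_adjacent_intervals (intervalIntegrable_exp_mul_I hφ le_rfl hm.1 hm.2)
    (intervalIntegrable_exp_mul_I hφ hm.1 hm.2 le_rfl)]
  calc _ ≤ 3 / c + 3 / c := (norm_add_le _ _).trans <| add_le_add
        (norm_integral_exp_mul_I_le_of_deriv_right_nonpos hm.1 (fun s hs => hφ s (hl hs))
          (fun s hs => hφ' s (hl hs)) hc (fun s hs => hφ'' s (hl hs)) hm0.le)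
        (norm_integral_exp_mul_I_le_of_deriv_left_nonneg hm.2 (fun s hs => hφ s (hr hs))
          (fun s hs => hφ' s (hr hs)) hc (fun s hs => hφ'' s (hr hs)) hm0.ge)
    _ = 6 / c := by ring

end VanDerCorput

section Amplitude

variable {E : Type*} [NormedAddCommGroup E] [NormedSpace ℝ E] [CompleteSpace E]
  {f : ℝ → E} {g g' : ℝ → ℝ} {a b M : ℝ}

theorem norm_integral_smul_le_of_deriv_nonpos (hf : Continuous f) (hab : a ≤ b)
    (hg : ∀ s ∈ Icc a b, HasDerivAt g (g' s) s) (hg' : ∀ s ∈ Icc a b, g' s ≤ 0) (hgb : 0 ≤ g b)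
    (hM : ∀ r ∈ Icc a b, ‖∫ s in a..r, f s‖ ≤ M) :
    ‖∫ s in a..b, g s • f s‖ ≤ g a * M := by
  rw [← uIcc_of_le hab] at hg hg' hM
  have hF : ∀ r, HasDerivAt (fun r => ∫ s in a..r, f s) (f r) r := fun r =>
    (hf.integral_hasStrictDerivAt a r).hasDerivAt
  have hg'_int : IntervalIntegrable g' volume a b := by
    have h : IntervalIntegrable (fun s => -g' s) volume a b := intervalIntegrable_deriv_of_nonneg
      (fun s hs => (hg s hs).continuousAt.continuousWithinAt.neg)
      (fun s hs => (hg s (Ioo_subset_Icc_self hs)).fun_neg)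
      fun s hs => neg_nonneg.2 (hg' s (Ioo_subset_Icc_self hs))
    simpa only [Pi.neg_def, neg_neg] using h.neg
  have hrem : ‖∫ s in a..b, g' s • ∫ u in a..s, f u‖ ≤ (g a - g b) * M :=
    calc _ ≤ ∫ s in a..b, -g' s * M := by
          refine norm_integral_le_of_norm_le hab (ae_of_all _ fun s hs => ?_)
            (hg'_int.neg.mul_const M)
          have hs' : s ∈ uIcc a b := uIcc_of_le hab ▸ Ioc_subset_Icc_self hs
          rw [norm_smul, Real.norm_of_nonpos (hg' s hs')]
          exact mul_le_mul_of_nonneg_left (hM s hs') (neg_nonneg.2 (hg' s hs'))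
      _ = (g a - g b) * M := by
          rw [intervalIntegral.integral_mul_const, intervalIntegral.integral_neg,
            integral_eq_sub_of_hasDerivAt hg hg'_int]
          ring
  rw [integral_smul_deriv_eq_deriv_smul hg (fun s _ => hF s) hg'_int (hf.intervalIntegrable a b),
    integral_same, smul_zero, sub_zero]
  calc _ ≤ g b * M + (g a - g b) * M := by
        refine (norm_sub_le _ _).trans (add_le_add ?_ hrem)
        rw [norm_smul, Real.norm_of_nonneg hgb]
        exact mul_le_mul_of_nonneg_left (hM b right_mem_uIcc) hgb
    _ = g a * M := by ring

theorem norm_integral_Ioi_smul_le_of_deriv_nonpos (hf : Continuous f)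
    (hg : ∀ s ∈ Ici a, HasDerivAt g (g' s) s) (hg' : ∀ s ∈ Ici a, g' s ≤ 0)
    (hg₀ : ∀ s ∈ Ici a, 0 ≤ g s) (hM : ∀ r ∈ Ici a, ‖∫ s in a..r, f s‖ ≤ M) :
    ‖∫ s in Ioi a, g s • f s‖ ≤ g a * M := by
  by_cases hint : IntegrableOn (fun s => g s • f s) (Ioi a)
  · refine le_of_tendsto (intervalIntegral_tendsto_integral_Ioi a hint Filter.tendsto_id).norm ?_
    filter_upwards [Filter.eventually_ge_atTop a] with b hb
    exact norm_integral_smul_le_of_deriv_nonpos hf hb (fun s hs => hg s hs.1)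
      (fun s hs => hg' s hs.1) (hg₀ b hb) fun r hr => hM r hr.1
  · rw [integral_undef hint, norm_zero]
    exact mul_nonneg (hg₀ a self_mem_Ici) ((norm_nonneg _).trans (hM a self_mem_Ici))

end Amplitude

theorem norm_integral_exp_quartic_phase_le {t : ℝ} (ht : 0 < t) (y : ℝ) {r : ℝ} (hr : 0 ≤ r) :
    ‖∫ s in 0..r, exp (((s ^ 4 + s ^ 2) * t - s * y : ℝ) * I)‖ ≤ 3 * t ^ (-(1 / 4 : ℝ)) := by
  set q := t ^ (1 / 4 : ℝ) with hq_def
  have hq : 0 < q := Real.rpow_pos_of_pos ht _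
  have hq4 : q ^ 4 = t := by
    rw [hq_def, ← Real.rpow_natCast, ← Real.rpow_mul ht.le]; norm_num
  rw [Real.rpow_neg ht.le, ← hq_def]
  have hφ (s : ℝ) : HasDerivAt (fun s => (s ^ 4 + s ^ 2) * t - s * y)
      ((4 * s ^ 3 + 2 * s) * t - y) s :=
    ((((hasDerivAt_pow 4 s).fun_add (hasDerivAt_pow 2 s)).mul_const t).fun_sub
      ((hasDerivAt_id' s).mul_const y)).congr_deriv (by push_cast; ring)
  have hφ' (s : ℝ) : HasDerivAt (fun s => (4 * s ^ 3 + 2 * s) * t - y) ((12 * s ^ 2 + 2) * t) s :=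
    ((((hasDerivAt_pow 3 s).const_mul 4).fun_add ((hasDerivAt_id' s).const_mul 2)).mul_const
      t).sub_const y |>.congr_deriv (by push_cast; ring)
  have hqr : 0 < q⁻¹ := inv_pos.2 hq
  rcases le_total r q⁻¹ with hrq | hrq
  · calc _ ≤ r - 0 := norm_integral_exp_mul_I_le _ hr
      _ ≤ 3 * q⁻¹ := by linarith
  have hconvex : ∀ s ∈ Icc q⁻¹ r, (3 * q) ^ 2 ≤ (12 * s ^ 2 + 2) * t := fun s hs => by
    have : q⁻¹ ^ 2 ≤ s ^ 2 := pow_le_pow_left₀ hqr.le hs.1 2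
    have : q ^ 2 ≤ s ^ 2 * t := by
      calc q ^ 2 = q⁻¹ ^ 2 * t := by rw [← hq4]; field_simp
        _ ≤ s ^ 2 * t := by gcongr
    nlinarith
  rw [← integral_add_adjacent_intervals
    (intervalIntegrable_exp_mul_I (fun s _ => hφ s) le_rfl hqr.le hrq)
    (intervalIntegrable_exp_mul_I (fun s _ => hφ s) hqr.le hrq le_rfl)]
  calc _ ≤ (q⁻¹ - 0) + 6 / (3 * q) := (norm_add_le _ _).trans <| add_le_add
        (norm_integral_exp_mul_I_le _ hqr.le)
        (norm_integral_exp_mul_I_le_of_sq_le_deriv2 hrq (fun s _ => hφ s) (fun s _ => hφ' s)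
          (by positivity) hconvex)
    _ = 3 * q⁻¹ := by field_simp; ring

theorem stmt_5 :
    ∃ C : ℝ, 0 < C ∧ ∀ x t y : ℝ, 0 < x → 0 < t →
      ‖∫ s in Ioi (0:ℝ),
          Complex.exp (-(s * x : ℝ) + Complex.I * (((s^4 + s^2) * t : ℝ) - s * y))‖
        ≤ C * t ^ (-(1/4 : ℝ)) := by
  refine ⟨3, by norm_num, fun x t y hx ht => ?_⟩
  have hintegrand (s : ℝ) :
      Complex.exp (-(s * x : ℝ) + Complex.I * (((s^4 + s^2) * t : ℝ) - s * y))
        = Real.exp (-(s * x)) • exp (((s ^ 4 + s ^ 2) * t - s * y : ℝ) * I) := by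
    rw [Complex.real_smul, ofReal_exp, ← Complex.exp_add]
    push_cast; ring_nf
  have hdecay (s : ℝ) : HasDerivAt (fun s => Real.exp (-(s * x))) (-x * Real.exp (-(s * x))) s :=
    ((hasDerivAt_id' s).mul_const x).fun_neg.exp.congr_deriv (by ring)
  simp_rw [hintegrand]
  simpa using norm_integral_Ioi_smul_le_of_deriv_nonpos (by fun_prop) (fun s _ => hdecay s)
    (fun s _ => by nlinarith [Real.exp_pos (-(s * x))]) (fun s _ => (Real.exp_pos _).le)
    fun r hr => norm_integral_exp_quartic_phase_le ht y hr
end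

section
/- The kernel $K_3(y;x,t) = \int_{1/\sqrt{2}}^\infty e^{is(x-y) - i(4s^4 - 2s^2 + 1/4)t - (s^2 - 1/2)^{1/2} x}\, ds$ satisfies $|K_3(y;x,t)| \le C t^{-1/4}$ for all $t > 0$, $x > 0$, $y \in \mathbb{R}$. -/
/-!
Write the integrand as `p₃ x s · e^{i φ₃(s)}`: for `x ≥ 0` the amplitude `p₃ x` takes values in
`[0, 1]` and is decreasing. Put `τ = t^{1/4}` and `a = 1/√2`. On `[a, a + τ⁻¹]` the integral is
bounded by the length `τ⁻¹`. Beyond it, `φ₃'' = -(48 s² - 4) t ≤ -25 τ²`, and van der Corput's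
second derivative test (with a monotone amplitude) bounds the rest by `10 / √(25 τ²) = 2 / τ`.
Both bounds are uniform in the upper endpoint, so they pass to the improper integral.
-/

open MeasureTheory Set Complex

section VanDerCorput

variable {A A' φ ψ ψ' q q' : ℝ → ℝ} {u v μ κ : ℝ}

lemma norm_ofReal_mul_cexp_I_mul (a θ : ℝ) : ‖(a : ℂ) * cexp (I * θ)‖ = |a| := by
  rw [norm_mul, norm_exp_I_mul_ofReal, Complex.norm_real, Real.norm_eq_abs, mul_one]

lemma norm_integral_ofReal_mul_cexp_le_sub (huv : u ≤ v) (hA : ∀ s ∈ Icc u v, |A s| ≤ 1) :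
    ‖∫ s in u..v, (A s : ℂ) * cexp (I * φ s)‖ ≤ v - u := by
  have h := intervalIntegral.norm_integral_le_of_norm_le_const (C := 1)
    (f := fun s => (A s : ℂ) * cexp (I * φ s)) fun s hs => by
      rw [uIoc_of_le huv] at hs
      rw [norm_ofReal_mul_cexp_I_mul]
      exact hA s (Ioc_subset_Icc_self hs)
  rwa [one_mul, abs_of_nonneg (sub_nonneg.2 huv)] at h

lemma antitoneOn_add_mul_of_hasDerivAt_le (hψ : ∀ s ∈ Icc u v, HasDerivAt ψ (ψ' s) s)
    (hψ' : ∀ s ∈ Icc u v, ψ' s ≤ -κ) : AntitoneOn (fun s => ψ s + κ * s) (Icc u v) := by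
  have hd : ∀ s ∈ Icc u v, HasDerivAt (fun s => ψ s + κ * s) (ψ' s + κ) s := fun s hs =>
    ((hψ s hs).add ((hasDerivAt_id s).const_mul κ)).congr_deriv (by simp)
  refine antitoneOn_of_hasDerivWithinAt_nonpos (convex_Icc u v) (f' := fun s => ψ' s + κ)
    (HasDerivAt.continuousOn hd) (fun s hs => ?_) fun s hs => ?_
  · rw [interior_Icc] at hs ⊢
    exact (hd s (Ioo_subset_Icc_self hs)).hasDerivWithinAt
  · rw [interior_Icc] at hs
    linarith [hψ' s (Ioo_subset_Icc_self hs)]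

lemma AntitoneOn.exists_Icc_split {g : ℝ → ℝ} {a b : ℝ} (hg : AntitoneOn g (Icc a b))
    (hc : ContinuousOn g (Icc a b)) (hab : a ≤ b) (m : ℝ) :
    ∃ c ∈ Icc a b, (a < c → ∀ s ∈ Icc a c, m ≤ g s) ∧ (c < b → ∀ s ∈ Icc c b, g s ≤ m) := by
  have ha : a ∈ Icc a b := left_mem_Icc.2 hab
  have hb : b ∈ Icc a b := right_mem_Icc.2 hab
  by_cases hmb : m ≤ g b
  · exact ⟨b, hb, fun _ s hs => hmb.trans (hg hs hb hs.2), fun h => absurd h (lt_irrefl b)⟩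
  by_cases hma : g a ≤ m
  · exact ⟨a, ha, fun h => absurd h (lt_irrefl a), fun _ s hs => (hg ha hs hs.1).trans hma⟩
  obtain ⟨c, hc, rfl⟩ := intermediate_value_Icc' hab hc ⟨(not_le.1 hmb).le, (not_le.1 hma).le⟩
  exact ⟨c, hc, fun _ s hs => hg ⟨hs.1, hs.2.trans hc.2⟩ hc hs.2,
    fun _ s hs => hg hc ⟨hc.1.trans hs.1, hs.2⟩ hs.1⟩

lemma intervalIntegrable_deriv_of_nonpos (huv : u ≤ v)
    (hA : ∀ s ∈ Icc u v, HasDerivAt A (A' s) s) (hA' : ∀ s ∈ Icc u v, A' s ≤ 0) :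
    IntervalIntegrable A' volume u v := by
  have h := intervalIntegral.intervalIntegrable_deriv_of_nonneg (g := -A) (g' := -A')
    (a := u) (b := v) ?_ ?_ ?_
  · simpa using h.neg
  · rw [uIcc_of_le huv]
    exact (HasDerivAt.continuousOn hA).neg
  · rw [min_eq_left huv, max_eq_right huv]
    exact fun s hs => (hA s (Ioo_subset_Icc_self hs)).neg
  · rw [min_eq_left huv, max_eq_right huv]
    exact fun s hs => neg_nonneg.2 (hA' s (Ioo_subset_Icc_self hs))

lemma norm_integral_mul_cexp_le_of_hasDerivAt (huv : u ≤ v)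
    (hq : ∀ s ∈ Icc u v, HasDerivAt q (q' s) s) (hq' : IntervalIntegrable q' volume u v)
    (hφ : ∀ s ∈ Icc u v, HasDerivAt φ (ψ s) s) (hψ : ContinuousOn ψ (Icc u v)) :
    ‖∫ s in u..v, ((q s * ψ s : ℝ) : ℂ) * cexp (I * φ s)‖
      ≤ |q u| + |q v| + ∫ s in u..v, |q' s| := by
  have hIcc : uIcc u v = Icc u v := uIcc_of_le huv
  have hE : ∀ s ∈ uIcc u v, HasDerivAt (fun s => cexp (I * φ s))
      (cexp (I * φ s) * (I * ψ s)) s := fun s hs =>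
    (((hφ s (hIcc ▸ hs)).ofReal_comp).const_mul I).cexp
  have hE' : IntervalIntegrable (fun s => cexp (I * φ s) * (I * ψ s)) volume u v := by
    refine ContinuousOn.intervalIntegrable (hIcc ▸ ?_)
    exact (HasDerivAt.continuousOn fun s hs => hE s (hIcc ▸ hs)).mul
      (continuousOn_const.mul (continuous_ofReal.comp_continuousOn hψ))
  have hibp := intervalIntegral.integral_mul_deriv_eq_deriv_mul
    (fun s hs => (hq s (hIcc ▸ hs)).ofReal_comp) hE ⟨hq'.1.ofReal, hq'.2.ofReal⟩ hE'
  have hrw : ∫ s in u..v, ((q s * ψ s : ℝ) : ℂ) * cexp (I * φ s)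
      = -I * ∫ s in u..v, (q s : ℂ) * (cexp (I * φ s) * (I * ψ s)) := by
    rw [← intervalIntegral.integral_const_mul]
    congr 1 with s
    push_cast
    ring_nf
    rw [I_sq]
    ring
  rw [hrw, hibp, norm_mul, norm_neg, norm_I, one_mul]
  refine (norm_sub_le _ _).trans (add_le_add ((norm_sub_le _ _).trans_eq ?_) ?_)
  · simp only [norm_mul, norm_exp_I_mul_ofReal, Complex.norm_real, Real.norm_eq_abs, mul_one]
    ring
  · refine (intervalIntegral.norm_integral_le_integral_norm huv).trans_eq ?_
    congr 1 with s
    rw [norm_ofReal_mul_cexp_I_mul]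

lemma abs_deriv_div_le_of_nonpos {a a' y y' : ℝ} (hμ : 0 < μ) (hy : μ ≤ |y|)
    (ha : a ∈ Icc 0 1) (ha' : a' ≤ 0) (hy' : y' ≤ 0) :
    |a' * y⁻¹ - y' * (a / y ^ 2)| ≤ -y' * (y ^ 2)⁻¹ - a' / μ := by
  have hy2 : 0 < y ^ 2 := by
    rw [← sq_abs]; exact pow_pos (hμ.trans_le hy) 2
  calc |a' * y⁻¹ - y' * (a / y ^ 2)| ≤ |a' * y⁻¹| + |y' * (a / y ^ 2)| := abs_sub _ _
    _ = -a' / |y| + -y' * (a / y ^ 2) := by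
      rw [abs_mul, abs_inv, abs_of_nonpos ha', abs_mul, abs_of_nonpos hy',
        abs_of_nonneg (div_nonneg ha.1 hy2.le)]
      ring
    _ ≤ -a' / μ + -y' * (1 / y ^ 2) := by
      gcongr
      · linarith
      · linarith
      · exact ha.2
    _ = -y' * (y ^ 2)⁻¹ - a' / μ := by ring

lemma intervalIntegrable_deriv_div (huv : u ≤ v)
    (hA : ∀ s ∈ Icc u v, HasDerivAt A (A' s) s) (hA' : ∀ s ∈ Icc u v, A' s ≤ 0)
    (hψ : ∀ s ∈ Icc u v, HasDerivAt ψ (ψ' s) s) (hψ' : ∀ s ∈ Icc u v, ψ' s ≤ 0)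
    (hψ0 : ∀ s ∈ Icc u v, ψ s ≠ 0) :
    IntervalIntegrable (fun s => A' s * (ψ s)⁻¹ - ψ' s * (A s / ψ s ^ 2)) volume u v := by
  rw [← uIcc_of_le huv] at hψ0
  have hψc := uIcc_of_le huv ▸ HasDerivAt.continuousOn hψ
  have hAc := uIcc_of_le huv ▸ HasDerivAt.continuousOn hA
  exact ((intervalIntegrable_deriv_of_nonpos huv hA hA').mul_continuousOn (hψc.inv₀ hψ0)).sub
    ((intervalIntegrable_deriv_of_nonpos huv hψ hψ').mul_continuousOn
      (hAc.div (hψc.pow 2) fun s hs => pow_ne_zero 2 (hψ0 s hs)))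

lemma integral_abs_deriv_div_le (huv : u ≤ v) (hμ : 0 < μ)
    (hA : ∀ s ∈ Icc u v, HasDerivAt A (A' s) s) (hA' : ∀ s ∈ Icc u v, A' s ≤ 0)
    (hA01 : MapsTo A (Icc u v) (Icc 0 1))
    (hψ : ∀ s ∈ Icc u v, HasDerivAt ψ (ψ' s) s) (hψ' : ∀ s ∈ Icc u v, ψ' s ≤ 0)
    (hψμ : (∀ s ∈ Icc u v, μ ≤ ψ s) ∨ ∀ s ∈ Icc u v, ψ s ≤ -μ) :
    ∫ s in u..v, |A' s * (ψ s)⁻¹ - ψ' s * (A s / ψ s ^ 2)| ≤ 2 / μ := by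
  have hu : u ∈ Icc u v := left_mem_Icc.2 huv
  have hv : v ∈ Icc u v := right_mem_Icc.2 huv
  have hμψ : ∀ s ∈ Icc u v, μ ≤ |ψ s| := fun s hs =>
    le_abs'.2 (hψμ.symm.imp (· s hs) (· s hs))
  have hψ0 : ∀ s ∈ Icc u v, ψ s ≠ 0 := fun s hs h => by
    linarith [hμψ s hs, h ▸ abs_zero (α := ℝ)]
  -- the derivative of `1 / ψ - A / μ` dominates `|(A / ψ)'|`
  set ρ' := fun s => -ψ' s * (ψ s ^ 2)⁻¹ - A' s / μ
  have hρ : ∀ s ∈ uIcc u v, HasDerivAt (fun s => (ψ s)⁻¹ - A s / μ) (ρ' s) s := fun s hs => by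
    rw [uIcc_of_le huv] at hs
    exact (((hψ s hs).inv (hψ0 s hs)).sub ((hA s hs).div_const μ)).congr_deriv
      (by simp only [ρ']; ring)
  have hρ' : IntervalIntegrable ρ' volume u v :=
    ((intervalIntegrable_deriv_of_nonpos huv hψ hψ').neg.mul_continuousOn
      (uIcc_of_le huv ▸ ((HasDerivAt.continuousOn hψ).pow 2).inv₀ fun s hs =>
        pow_ne_zero 2 (hψ0 s hs))).sub
      ((intervalIntegrable_deriv_of_nonpos huv hA hA').div_const μ)
  have hinv : (ψ v)⁻¹ - (ψ u)⁻¹ ≤ 1 / μ := by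
    rw [one_div]
    rcases hψμ with h | h
    · linarith [inv_anti₀ hμ (h v hv), inv_pos.2 (hμ.trans_le (h u hu))]
    · have := inv_anti₀ hμ (le_neg.1 (h u hu))
      rw [inv_neg] at this
      linarith [inv_lt_zero.2 ((h v hv).trans_lt (neg_neg_of_pos hμ))]
  calc _ ≤ ∫ s in u..v, ρ' s :=
        intervalIntegral.integral_mono_on huv
          (intervalIntegrable_deriv_div huv hA hA' hψ hψ' hψ0).abs hρ' fun s hs =>
            abs_deriv_div_le_of_nonpos hμ (hμψ s hs) (hA01 hs) (hA' s hs) (hψ' s hs)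
    _ = (ψ v)⁻¹ - (ψ u)⁻¹ + (A u - A v) / μ := by
      rw [intervalIntegral.integral_eq_sub_of_hasDerivAt hρ hρ']; ring
    _ ≤ 1 / μ + 1 / μ := by
      gcongr
      linarith [(hA01 hu).2, (hA01 hv).1]
    _ = 2 / μ := by ring

/-- Van der Corput's first derivative test, with a monotone amplitude. -/
theorem norm_integral_ofReal_mul_cexp_le_of_abs_deriv_ge (huv : u ≤ v) (hμ : 0 < μ)
    (hA : ∀ s ∈ Icc u v, HasDerivAt A (A' s) s) (hA' : ∀ s ∈ Icc u v, A' s ≤ 0)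
    (hA01 : MapsTo A (Icc u v) (Icc 0 1))
    (hφ : ∀ s ∈ Icc u v, HasDerivAt φ (ψ s) s) (hψ : ∀ s ∈ Icc u v, HasDerivAt ψ (ψ' s) s)
    (hψ' : ∀ s ∈ Icc u v, ψ' s ≤ 0)
    (hψμ : (∀ s ∈ Icc u v, μ ≤ ψ s) ∨ ∀ s ∈ Icc u v, ψ s ≤ -μ) :
    ‖∫ s in u..v, (A s : ℂ) * cexp (I * φ s)‖ ≤ 4 / μ := by
  have hμψ : ∀ s ∈ Icc u v, μ ≤ |ψ s| := fun s hs =>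
    le_abs'.2 (hψμ.symm.imp (· s hs) (· s hs))
  have hψ0 : ∀ s ∈ Icc u v, ψ s ≠ 0 := fun s hs h => by
    linarith [hμψ s hs, h ▸ abs_zero (α := ℝ)]
  -- integrate by parts against `(e^{iφ})' = iψ e^{iφ}`, with `A / ψ` as the other factor
  have hq : ∀ s ∈ Icc u v, HasDerivAt (fun s => A s / ψ s)
      (A' s * (ψ s)⁻¹ - ψ' s * (A s / ψ s ^ 2)) s := fun s hs =>
    ((hA s hs).div (hψ s hs) (hψ0 s hs)).congr_deriv (by field_simp [hψ0 s hs])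
  have hq_le : ∀ s ∈ Icc u v, |A s / ψ s| ≤ 1 / μ := fun s hs => by
    rw [abs_div]
    exact div_le_div₀ zero_le_one (abs_le.2 ⟨by linarith [(hA01 hs).1], (hA01 hs).2⟩) hμ
      (hμψ s hs)
  have hA_eq : EqOn (fun s => (A s : ℂ) * cexp (I * φ s))
      (fun s => ((A s / ψ s * ψ s : ℝ) : ℂ) * cexp (I * φ s)) (uIcc u v) := fun s hs => by
    rw [uIcc_of_le huv] at hs
    simp only [div_mul_cancel₀ _ (hψ0 s hs)]
  rw [intervalIntegral.integral_congr hA_eq]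
  calc _ ≤ _ := norm_integral_mul_cexp_le_of_hasDerivAt huv hq
          (intervalIntegrable_deriv_div huv hA hA' hψ hψ' hψ0) hφ (HasDerivAt.continuousOn hψ)
    _ ≤ 1 / μ + 1 / μ + 2 / μ :=
      add_le_add (add_le_add (hq_le u (left_mem_Icc.2 huv)) (hq_le v (right_mem_Icc.2 huv)))
        (integral_abs_deriv_div_le huv hμ hA hA' hA01 hψ hψ' hψμ)
    _ = 4 / μ := by ring

lemma continuousOn_ofReal_mul_cexp {D : Set ℝ} (hA : ContinuousOn A D) (hφ : ContinuousOn φ D) :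
    ContinuousOn (fun s => (A s : ℂ) * cexp (I * φ s)) D := by
  fun_prop

/-- Van der Corput's second derivative test, with a monotone amplitude. -/
theorem norm_integral_ofReal_mul_cexp_le_of_second_deriv_le (huv : u ≤ v) (hκ : 0 < κ)
    (hA : ∀ s ∈ Icc u v, HasDerivAt A (A' s) s) (hA' : ∀ s ∈ Icc u v, A' s ≤ 0)
    (hA01 : MapsTo A (Icc u v) (Icc 0 1))
    (hφ : ∀ s ∈ Icc u v, HasDerivAt φ (ψ s) s) (hψ : ∀ s ∈ Icc u v, HasDerivAt ψ (ψ' s) s)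
    (hψ' : ∀ s ∈ Icc u v, ψ' s ≤ -κ) :
    ‖∫ s in u..v, (A s : ℂ) * cexp (I * φ s)‖ ≤ 10 / √κ := by
  set μ := √κ
  have hμ : 0 < μ := Real.sqrt_pos.2 hκ
  have hψc := HasDerivAt.continuousOn hψ
  have hanti : AntitoneOn ψ (Icc u v) := by
    simpa using antitoneOn_add_mul_of_hasDerivAt_le (κ := 0) hψ fun s hs => by
      linarith [hψ' s hs]
  -- `ψ ≥ μ` on `[u, c₁]`, `ψ ≤ -μ` on `[c₂, v]`; as `ψ' ≤ -κ`, `c₂ - c₁ ≤ 2μ/κ = 2/μ`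
  obtain ⟨c₁, hc₁, hge₁, hle₁⟩ := hanti.exists_Icc_split hψc huv μ
  have hsub : Icc c₁ v ⊆ Icc u v := Icc_subset_Icc_left hc₁.1
  obtain ⟨c₂, hc₂, hge₂, hle₂⟩ := (hanti.mono hsub).exists_Icc_split (hψc.mono hsub) hc₁.2 (-μ)
  have houter : ∀ p r, u ≤ p → r ≤ v → p ≤ r →
      (p < r → (∀ s ∈ Icc p r, μ ≤ ψ s) ∨ ∀ s ∈ Icc p r, ψ s ≤ -μ) →
      ‖∫ s in p..r, (A s : ℂ) * cexp (I * φ s)‖ ≤ 4 / μ := fun p r hp hr hpr h => by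
    rcases hpr.eq_or_lt with rfl | hpr
    · simp only [intervalIntegral.integral_same, norm_zero]; positivity
    have hpr' : Icc p r ⊆ Icc u v := Icc_subset_Icc hp hr
    exact norm_integral_ofReal_mul_cexp_le_of_abs_deriv_ge hpr.le hμ (fun s hs => hA s (hpr' hs))
      (fun s hs => hA' s (hpr' hs)) (hA01.mono_left hpr') (fun s hs => hφ s (hpr' hs))
      (fun s hs => hψ s (hpr' hs)) (fun s hs => (hψ' s (hpr' hs)).trans (by linarith)) (h hpr)
  have h₁ := houter u c₁ le_rfl hc₁.2 hc₁.1 fun h => Or.inl (hge₁ h)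
  have h₃ := houter c₂ v (hc₁.1.trans hc₂.1) le_rfl hc₂.2 fun h => Or.inr (hle₂ h)
  have h₂ : ‖∫ s in c₁..c₂, (A s : ℂ) * cexp (I * φ s)‖ ≤ 2 / μ := by
    refine (norm_integral_ofReal_mul_cexp_le_sub hc₂.1 fun s hs => ?_).trans ?_
    · have := hA01 (hsub (Icc_subset_Icc_right hc₂.2 hs))
      exact abs_le.2 ⟨by linarith [this.1], this.2⟩
    rcases hc₂.1.eq_or_lt with h | h
    · rw [h, sub_self]; positivity
    have hψc₁ : ψ c₁ ≤ μ := hle₁ (h.trans_le hc₂.2) c₁ ⟨le_rfl, hc₁.2⟩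
    have hψc₂ : -μ ≤ ψ c₂ := hge₂ h c₂ ⟨hc₂.1, le_rfl⟩
    have hdecay := antitoneOn_add_mul_of_hasDerivAt_le hψ hψ' hc₁ (hsub hc₂) hc₂.1
    rw [le_div_iff₀ hμ]
    nlinarith [Real.sq_sqrt hκ.le]
  have hint : ∀ p r, u ≤ p → r ≤ v → p ≤ r →
      IntervalIntegrable (fun s => (A s : ℂ) * cexp (I * φ s)) volume p r := fun p r hp hr hpr =>
    ((continuousOn_ofReal_mul_cexp (HasDerivAt.continuousOn hA) (HasDerivAt.continuousOn hφ)).mono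
      (Icc_subset_Icc hp hr)).intervalIntegrable_of_Icc hpr
  rw [← intervalIntegral.integral_add_adjacent_intervals (b := c₁)
      (hint u c₁ le_rfl hc₁.2 hc₁.1) (hint c₁ v hc₁.1 le_rfl hc₁.2),
    ← intervalIntegral.integral_add_adjacent_intervals (a := c₁) (b := c₂)
      (hint c₁ c₂ hc₁.1 hc₂.2 hc₂.1) (hint c₂ v (hc₁.1.trans hc₂.1) le_rfl hc₂.2)]
  calc _ ≤ 4 / μ + (2 / μ + 4 / μ) :=
        (norm_add_le _ _).trans (add_le_add h₁ ((norm_add_le _ _).trans (add_le_add h₂ h₃)))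
    _ = 10 / μ := by ring

end VanDerCorput

noncomputable def p₃ (x s : ℝ) : ℝ := Real.exp (-(√(s ^ 2 - 1 / 2) * x))

noncomputable def φ₃ (t ξ s : ℝ) : ℝ := s * ξ - (4 * s ^ 4 - 2 * s ^ 2 + 1 / 4) * t

lemma cexp_eq_ofReal_p₃_mul (t x y s : ℝ) :
    cexp (I * ((s * (x - y) : ℝ) - ((4*s^4 - 2*s^2 + 1/4) * t : ℝ)) - (√(s^2 - 1/2) * x : ℝ))
      = (p₃ x s : ℂ) * cexp (I * φ₃ t (x - y) s) := by
  rw [p₃, φ₃, sub_eq_neg_add, Complex.exp_add, ofReal_exp]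
  push_cast
  ring_nf

lemma p₃_mem_Icc {x : ℝ} (hx : 0 ≤ x) (s : ℝ) : p₃ x s ∈ Icc 0 1 :=
  ⟨(Real.exp_pos _).le, Real.exp_le_one_iff.2 (neg_nonpos.2 (mul_nonneg (Real.sqrt_nonneg _) hx))⟩

lemma hasDerivAt_p₃ (x : ℝ) {s : ℝ} (hs : 1 / 2 < s ^ 2) :
    HasDerivAt (p₃ x) (-(s / √(s ^ 2 - 1 / 2) * x) * p₃ x s) s := by
  have hsqrt : HasDerivAt (fun s => √(s ^ 2 - 1 / 2)) (s / √(s ^ 2 - 1 / 2)) s :=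
    (((hasDerivAt_pow 2 s).sub_const (1 / 2)).sqrt (by linarith)).congr_deriv (by push_cast; ring)
  exact ((hsqrt.mul_const x).neg.exp).congr_deriv (mul_comm _ _)

lemma hasDerivAt_φ₃ (t ξ s : ℝ) : HasDerivAt (φ₃ t ξ) (ξ - (16 * s ^ 3 - 4 * s) * t) s :=
  (((hasDerivAt_id s).mul_const ξ).sub (((((hasDerivAt_pow 4 s).const_mul 4).sub
    ((hasDerivAt_pow 2 s).const_mul 2)).add_const (1 / 4)).mul_const t)).congr_deriv
    (by push_cast; ring)

lemma hasDerivAt_deriv_φ₃ (t ξ s : ℝ) :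
    HasDerivAt (fun s => ξ - (16 * s ^ 3 - 4 * s) * t) (-((48 * s ^ 2 - 4) * t)) s :=
  ((((hasDerivAt_pow 3 s).const_mul 16).sub ((hasDerivAt_id s).const_mul 4)).mul_const t
    |>.const_sub ξ).congr_deriv (by push_cast; ring)

lemma continuous_p₃_mul_cexp (x : ℝ) {φ : ℝ → ℝ} (hφ : Continuous φ) :
    Continuous fun s => (p₃ x s : ℂ) * cexp (I * φ s) := by
  unfold p₃; fun_prop

lemma one_div_sqrt_two_sq : (1 / √2 : ℝ) ^ 2 = 1 / 2 := by
  rw [div_pow, one_pow, Real.sq_sqrt zero_le_two]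

theorem norm_integral_p₃_mul_cexp_φ₃_le {τ x : ℝ} (hτ : 0 < τ) (hx : 0 ≤ x) (ξ : ℝ) {b : ℝ}
    (hb : 1 / √2 ≤ b) :
    ‖∫ s in (1 / √2)..b, (p₃ x s : ℂ) * cexp (I * φ₃ (τ ^ 4) ξ s)‖ ≤ 3 / τ := by
  set a : ℝ := 1 / √2
  have ha : 0 < a := by positivity
  have ha2 : a ^ 2 = 1 / 2 := one_div_sqrt_two_sq
  have hτ' : 0 < τ⁻¹ := inv_pos.2 hτ
  set S := a + τ⁻¹
  have htriv : ∀ p r, p ≤ r →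
      ‖∫ s in p..r, (p₃ x s : ℂ) * cexp (I * φ₃ (τ ^ 4) ξ s)‖ ≤ r - p := fun p r h =>
    norm_integral_ofReal_mul_cexp_le_sub h fun s _ =>
      abs_le.2 ⟨by linarith [(p₃_mem_Icc hx s).1], (p₃_mem_Icc hx s).2⟩
  have h3 : τ⁻¹ + 2 / τ = 3 / τ := by ring
  rcases le_or_gt b S with hbS | hSb
  · calc _ ≤ b - a := htriv _ _ hb
      _ ≤ τ⁻¹ + 2 / τ := by linarith [div_pos two_pos hτ]
      _ = 3 / τ := h3
  have hS : ∀ s ∈ Icc S b, 1 / 2 + τ⁻¹ ^ 2 ≤ s ^ 2 ∧ 0 < s := fun s hs => by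
    constructor <;> nlinarith [hs.1]
  have htail : ‖∫ s in S..b, (p₃ x s : ℂ) * cexp (I * φ₃ (τ ^ 4) ξ s)‖ ≤ 2 / τ := by
    have := norm_integral_ofReal_mul_cexp_le_of_second_deriv_le (κ := 25 * τ ^ 2) hSb.le
      (by positivity) (fun s hs => hasDerivAt_p₃ x (by nlinarith [hS s hs]))
      (fun s hs => mul_nonpos_of_nonpos_of_nonneg (neg_nonpos.2 (by
        have := (hS s hs).2; positivity)) (p₃_mem_Icc hx s).1)
      (fun s _ => p₃_mem_Icc hx s) (fun s _ => hasDerivAt_φ₃ (τ ^ 4) ξ s)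
      (fun s _ => hasDerivAt_deriv_φ₃ (τ ^ 4) ξ s) fun s hs => by
        have h1 := mul_le_mul_of_nonneg_right (hS s hs).1 (pow_nonneg hτ.le 4)
        have h2 : τ⁻¹ ^ 2 * τ ^ 4 = τ ^ 2 := by field_simp
        nlinarith [pow_pos hτ 2, pow_pos hτ 4]
    rwa [Real.sqrt_mul' _ (sq_nonneg τ), Real.sqrt_sq hτ.le,
      show √(25 : ℝ) = 5 by rw [show (25 : ℝ) = 5 ^ 2 by norm_num, Real.sqrt_sq (by norm_num)],
      show (10 : ℝ) / (5 * τ) = 2 / τ by field_simp; norm_num] at this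
  have hint := fun p r => (continuous_p₃_mul_cexp x (φ := φ₃ (τ ^ 4) ξ)
    (by unfold φ₃; fun_prop)).intervalIntegrable (μ := volume) p r
  rw [← intervalIntegral.integral_add_adjacent_intervals (hint a S) (hint S b), ← h3]
  refine (norm_add_le _ _).trans (add_le_add ((htriv a S (by linarith)).trans_eq ?_) htail)
  ring

lemma integrableOn_p₃_mul_cexp {x : ℝ} (hx : 0 < x) {φ : ℝ → ℝ} (hφ : Continuous φ) :
    IntegrableOn (fun s => (p₃ x s : ℂ) * cexp (I * φ s)) (Ioi (1 / √2)) := by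
  set a : ℝ := 1 / √2
  have ha : 0 < a := by positivity
  have ha2 : a ^ 2 = 1 / 2 := one_div_sqrt_two_sq
  refine Integrable.mono' ((exp_neg_integrableOn_Ioi a hx).const_mul (Real.exp (x * a)))
    (continuous_p₃_mul_cexp x hφ).aestronglyMeasurable.restrict ?_
  filter_upwards [ae_restrict_mem measurableSet_Ioi] with s (hs : a < s)
  have hr : s - a ≤ √(s ^ 2 - 1 / 2) :=
    (le_abs_self _).trans (Real.abs_le_sqrt (by nlinarith [mul_pos ha (sub_pos.2 hs)]))
  rw [norm_ofReal_mul_cexp_I_mul, abs_of_nonneg (p₃_mem_Icc hx.le s).1, p₃, ← Real.exp_add]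
  exact Real.exp_le_exp.2 (by nlinarith)

theorem stmt_6 :
    ∃ C : ℝ, 0 < C ∧ ∀ t x y : ℝ, 0 < t → 0 < x →
      ‖∫ s in Ioi (1 / Real.sqrt 2 : ℝ),
          Complex.exp (Complex.I * ((s * (x - y) : ℝ) - ((4*s^4 - 2*s^2 + 1/4) * t : ℝ))
            - (Real.sqrt (s^2 - 1/2) * x : ℝ))‖
        ≤ C * t ^ (-(1/4 : ℝ)) := by
  refine ⟨3, three_pos, fun t x y ht hx => ?_⟩
  obtain ⟨τ, hτ, rfl⟩ : ∃ τ > 0, t = τ ^ 4 := ⟨t ^ (1 / 4 : ℝ), by positivity, by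
    rw [← Real.rpow_natCast, ← Real.rpow_mul ht.le]; norm_num⟩
  have hpow : (τ ^ 4) ^ (-(1 / 4 : ℝ)) = τ⁻¹ := by
    rw [← Real.rpow_natCast, ← Real.rpow_mul hτ.le]; norm_num [Real.rpow_neg_one]
  simp_rw [cexp_eq_ofReal_p₃_mul, hpow, ← div_eq_mul_inv]
  have hφ : Continuous (φ₃ (τ ^ 4) (x - y)) := by unfold φ₃; fun_prop
  exact le_of_tendsto (intervalIntegral_tendsto_integral_Ioi _
    (integrableOn_p₃_mul_cexp hx hφ) Filter.tendsto_id).norm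
    (Filter.eventually_atTop.2 ⟨1 / √2, fun b hb => norm_integral_p₃_mul_cexp_φ₃_le hτ hx.le _ hb⟩)
end
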